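/- arXiv:2511.22602 — 2 statements merged into one kernel-verified Lean document; each statement's English description precedes it below -/
import Mathlib

section
/- For every n ≥ 1, the n-th generalized graded codimension of UT₂ with its canonical ℤ₂-grading and with the trivial action B = F·1 (so that c_n^{F·1} is the ordinary ℤ₂-graded codimension of UT₂) is c_n^{F·1} = n·2^{n−1} + 1. -/
noncomputable section

/-- The algebra of `2 × 2` matrices over `F` (ambient algebra for `UT₂`). -/
abbrev M2 (F : Type*) [Field F] := Matrix (Fin 2) (Fin 2) F

/-- The matrix unit `e₁₁`. -/
def e11 (F : Type*) [Field F] : M2 F := Matrix.single 0 0 1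

/-- The matrix unit `e₁₂`. -/
def e12 (F : Type*) [Field F] : M2 F := Matrix.single 0 1 1

/-- The matrix unit `e₂₂`. -/
def e22 (F : Type*) [Field F] : M2 F := Matrix.single 1 1 1

/-- The homogeneous components of the canonical `ℤ₂`-grading of `UT₂`:
`UT₂⁰ = F e₁₁ ⊕ F e₂₂` and `UT₂¹ = F e₁₂`. -/
def utComp (F : Type*) [Field F] (b : Bool) : Submodule F (M2 F) :=
  if b then Submodule.span F {e12 F} else Submodule.span F {e11 F, e22 F}

/-- `UT₂`, the set of `2 × 2` upper triangular matrices. -/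
def UTset (F : Type*) [Field F] : Set (M2 F) := {M | M 1 0 = 0}

/-- The space `V_B(γ)`: the `F`-span of all functions
`(x₁,…,xₙ) ↦ b₀ x_{σ(1)} b₁ x_{σ(2)} ⋯ b_{n-1} x_{σ(n)} bₙ` with `σ` a permutation and
`b₀,…,bₙ ∈ B`, defined on the homogeneous components prescribed by `γ ∈ {0,1}ⁿ`. -/
def Vspan (F : Type*) [Field F] (B : Set (M2 F)) {n : ℕ} (γ : Fin n → Bool) :
    Submodule F ((∀ i : Fin n, ↥(utComp F (γ i))) → M2 F) :=
  Submodule.span F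
    {f | ∃ (σ : Equiv.Perm (Fin n)) (b : Fin (n + 1) → M2 F),
      (∀ i, b i ∈ B) ∧
      f = fun x => b 0 * (List.ofFn fun i : Fin n => ((x (σ i) : M2 F) * b i.succ)).prod}


/-- The trivially acting subalgebra `F·1` of `UT₂`. -/
def F1set (F : Type*) [Field F] : Set (M2 F) := {M | ∃ a : F, M = a • (1 : M2 F)}

/-! Every variable of degree `0` is diagonal and every variable of degree `1` is a multiple of
`e₁₂`. The `(1,2)` entry of a product `y₁ ⋯ yₘ` of upper triangular matrices is
`∑ₚ (∏_{r<p} (y_r)₁₁) (y_p)₁₂ (∏_{r>p} (y_r)₂₂)`, and each summand vanishes as soon as some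
`y_r` with `r ≠ p` is odd. Hence a monomial in the graded variables is zero when two variables
are odd, and is `diag(∏ (x_i)₁₁, ∏ (x_i)₂₂)`, whatever the order, when all are even. When `x_j`
is the only odd variable, the monomial is `(∏_{i∈S} (x_i)₁₁) (x_j)₁₂ (∏_{i∉S, i≠j} (x_i)₂₂) e₁₂`,
where `S` is the set of variables standing to the left of `x_j`; every `S` occurs, and these
`2ⁿ⁻¹` functions are linearly independent, as evaluating at `e₁₁` on `S`, `e₂₂` off `S` shows.
The all-even `γ` thus contributes `1` and each of the `n` tuples with one odd entry `2ⁿ⁻¹`. -/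

theorem List.prod_ofFn_smul {R A : Type*} [CommSemiring R] [Semiring A] [Algebra R A] {m : ℕ}
    (c : Fin m → R) (g : Fin m → A) :
    (List.ofFn fun i => c i • g i).prod = (∏ i, c i) • (List.ofFn g).prod := by
  induction m with
  | zero => simp
  | succ k ih => simp [List.ofFn_succ, ih, Fin.prod_univ_succ, smul_smul, mul_comm]

theorem Fin.prod_Iio_succ {M : Type*} [CommMonoid M] {m : ℕ} (f : Fin (m + 1) → M) (q : Fin m) :
    ∏ r ∈ Finset.Iio q.succ, f r = f 0 * ∏ r ∈ Finset.Iio q, f r.succ := by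
  simp only [← Finset.filter_gt_eq_Iio, Finset.prod_filter, Fin.prod_univ_succ, Fin.succ_pos,
    if_true, Fin.succ_lt_succ_iff]

theorem Tuple.sort_symm_lt_sort_symm_of_lt {α : Type*} [LinearOrder α] {m : ℕ} {f : Fin m → α}
    {i j : Fin m} (h : f i < f j) : (Tuple.sort f).symm i < (Tuple.sort f).symm j := by
  by_contra hle
  have := Tuple.monotone_sort f (not_lt.1 hle)
  simp only [Function.comp_apply, Equiv.apply_symm_apply] at this
  exact this.not_gt h

theorem Bool.forall_false_or_exists_unique_true_or_two_true {ι : Type*} (γ : ι → Bool) :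
    (∀ i, γ i = false) ∨ (∃ j, γ j = true ∧ ∀ i, i ≠ j → γ i = false) ∨
      ∃ i₁ i₂, i₁ ≠ i₂ ∧ γ i₁ = true ∧ γ i₂ = true := by
  by_cases h2 : ∃ i₁ i₂, i₁ ≠ i₂ ∧ γ i₁ = true ∧ γ i₂ = true
  · exact .inr (.inr h2)
  by_cases h1 : ∃ j, γ j = true
  · obtain ⟨j, hj⟩ := h1
    refine .inr (.inl ⟨j, hj, fun i hi => ?_⟩)
    by_contra h
    exact h2 ⟨i, j, hi, by simpa using h, hj⟩
  · exact .inl fun i => by simpa using not_exists.1 h1 i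

namespace UT2

open Finset Matrix

variable {F : Type*} [Field F] {n : ℕ}

lemma e11_eq : e11 F = !![1, 0; 0, 0] := by
  ext i j; fin_cases i <;> fin_cases j <;> simp [e11]

lemma e12_eq : e12 F = !![0, 1; 0, 0] := by
  ext i j; fin_cases i <;> fin_cases j <;> simp [e12]

lemma e22_eq : e22 F = !![0, 0; 0, 1] := by
  ext i j; fin_cases i <;> fin_cases j <;> simp [e22]

lemma mem_utComp_false_iff {m : M2 F} : m ∈ utComp F false ↔ m 0 1 = 0 ∧ m 1 0 = 0 := by
  rw [utComp, if_neg Bool.false_ne_true, Submodule.mem_span_pair]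
  constructor
  · rintro ⟨a, b, rfl⟩
    simp [e11_eq, e22_eq]
  · rintro ⟨h01, h10⟩
    refine ⟨m 0 0, m 1 1, ?_⟩
    ext i j; fin_cases i <;> fin_cases j <;> simp [e11_eq, e22_eq, h01, h10]

lemma mem_utComp_true_iff {m : M2 F} :
    m ∈ utComp F true ↔ m 0 0 = 0 ∧ m 1 0 = 0 ∧ m 1 1 = 0 := by
  rw [utComp, if_pos rfl, Submodule.mem_span_singleton]
  constructor
  · rintro ⟨a, rfl⟩
    simp [e12_eq]
  · rintro ⟨h00, h10, h11⟩
    refine ⟨m 0 1, ?_⟩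
    ext i j; fin_cases i <;> fin_cases j <;> simp [e12_eq, h00, h10, h11]

lemma apply_one_zero_of_mem_utComp {b : Bool} {m : M2 F} (h : m ∈ utComp F b) : m 1 0 = 0 := by
  cases b
  · exact (mem_utComp_false_iff.1 h).2
  · exact (mem_utComp_true_iff.1 h).2.1

lemma list_prod_ofFn_of_upperTriangular {m : ℕ} (y : Fin m → M2 F) (hy : ∀ r, y r 1 0 = 0) :
    (List.ofFn y).prod = !![∏ r, y r 0 0,
      ∑ p, (∏ r ∈ Iio p, y r 0 0) * y p 0 1 * ∏ r ∈ Ioi p, y r 1 1; 0, ∏ r, y r 1 1] := by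
  induction m with
  | zero => simp [Matrix.one_fin_two]
  | succ m ih =>
    rw [List.ofFn_succ, List.prod_cons, ih _ fun r => hy r.succ, Matrix.eta_fin_two (y 0), hy 0,
      Matrix.mul_fin_two]
    simp only [Fin.prod_univ_succ, Fin.sum_univ_succ, Fin.prod_Iio_succ, Fin.prod_Ioi_succ,
      Finset.mul_sum]
    ext i j; fin_cases i <;> fin_cases j <;> simp [bot_eq_zero, mul_assoc, add_comm]

lemma prod_Iio_mul_mul_prod_Ioi_eq_zero {m : ℕ} {y : Fin m → M2 F} {p r : Fin m} (hrp : r ≠ p)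
    (h00 : y r 0 0 = 0) (h11 : y r 1 1 = 0) :
    (∏ r ∈ Iio p, y r 0 0) * y p 0 1 * ∏ r ∈ Ioi p, y r 1 1 = 0 := by
  rcases hrp.lt_or_gt with h | h
  · simp [prod_eq_zero (f := fun r => y r 0 0) (mem_Iio.2 h) h00]
  · simp [prod_eq_zero (f := fun r => y r 1 1) (mem_Ioi.2 h) h11]

def monomial (γ : Fin n → Bool) (σ : Equiv.Perm (Fin n)) :
    (∀ i : Fin n, ↥(utComp F (γ i))) → M2 F :=
  fun x => (List.ofFn fun r => (x (σ r) : M2 F)).prod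

lemma Vspan_F1set_eq (γ : Fin n → Bool) :
    Vspan F (F1set F) γ = Submodule.span F (Set.range (monomial γ)) := by
  apply le_antisymm
  · rw [Vspan, Submodule.span_le]
    rintro f ⟨σ, b, hb, rfl⟩
    choose a ha using hb
    have hf : (fun x : ∀ i : Fin n, ↥(utComp F (γ i)) =>
        b 0 * (List.ofFn fun i : Fin n => ((x (σ i) : M2 F) * b i.succ)).prod)
        = ((∏ i : Fin n, a i.succ) * a 0) • monomial γ σ := by
      funext x
      simp only [ha, mul_smul_comm, mul_one, List.prod_ofFn_smul, Pi.smul_apply, monomial,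
        smul_mul_assoc, one_mul, smul_smul]
    rw [hf]
    exact Submodule.smul_mem _ _ (Submodule.subset_span ⟨σ, rfl⟩)
  · rw [Submodule.span_le]
    rintro f ⟨σ, rfl⟩
    refine Submodule.subset_span ⟨σ, fun _ => 1, fun _ => ⟨1, (one_smul F _).symm⟩, ?_⟩
    funext x
    simp [monomial]

lemma monomial_apply (γ : Fin n → Bool) (σ : Equiv.Perm (Fin n))
    (x : ∀ i : Fin n, ↥(utComp F (γ i))) :
    monomial γ σ x = !![∏ i, (x i : M2 F) 0 0,
      ∑ p, (∏ r ∈ Iio p, (x (σ r) : M2 F) 0 0) * (x (σ p) : M2 F) 0 1 *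
        ∏ r ∈ Ioi p, (x (σ r) : M2 F) 1 1;
      0, ∏ i, (x i : M2 F) 1 1] := by
  rw [monomial,
    list_prod_ofFn_of_upperTriangular _ fun r => apply_one_zero_of_mem_utComp (x (σ r)).2,
    Equiv.prod_comp σ fun i => (x i : M2 F) 0 0, Equiv.prod_comp σ fun i => (x i : M2 F) 1 1]

section Even

variable {γ : Fin n → Bool} (hγ : ∀ i, γ i = false)
include hγ

lemma monomial_eq_of_forall_false (σ : Equiv.Perm (Fin n)) :
    monomial γ σ = fun x => !![∏ i, (x i : M2 F) 0 0, 0; 0, ∏ i, (x i : M2 F) 1 1] := by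
  funext x
  have h01 : ∀ i, (x i : M2 F) 0 1 = 0 := fun i => (mem_utComp_false_iff.1 (hγ i ▸ (x i).2)).1
  simp [monomial_apply, h01]

lemma finrank_Vspan_F1set_of_forall_false : Module.finrank F (Vspan F (F1set F) γ) = 1 := by
  rw [Vspan_F1set_eq, funext (monomial_eq_of_forall_false hγ), Set.range_const,
    finrank_span_singleton]
  intro h
  have h1 := congrFun (congrFun (congrFun h fun i =>
    ⟨1, hγ i ▸ mem_utComp_false_iff.2 (by simp)⟩) 0) 0
  simp at h1

end Even

lemma finrank_Vspan_F1set_of_two_odd {γ : Fin n → Bool} {i₁ i₂ : Fin n} (hne : i₁ ≠ i₂)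
    (h₁ : γ i₁ = true) (h₂ : γ i₂ = true) : Module.finrank F (Vspan F (F1set F) γ) = 0 := by
  suffices h : ∀ σ, monomial (F := F) γ σ = 0 by
    rw [Vspan_F1set_eq, Submodule.span_eq_bot.2 (by rintro _ ⟨σ, rfl⟩; exact h σ), finrank_bot]
  intro σ
  funext x
  have hodd : ∀ i, γ i = true → (x i : M2 F) 0 0 = 0 ∧ (x i : M2 F) 1 1 = 0 := fun i hi =>
    have h := mem_utComp_true_iff.1 (hi ▸ (x i).2)
    ⟨h.1, h.2.2⟩
  have hsum : ∀ p, (∏ r ∈ Iio p, (x (σ r) : M2 F) 0 0) * (x (σ p) : M2 F) 0 1 *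
      ∏ r ∈ Ioi p, (x (σ r) : M2 F) 1 1 = 0 := by
    intro p
    by_cases hp : σ.symm i₁ = p
    · have hne' : σ.symm i₂ ≠ p := fun h => hne (σ.symm.injective (hp.trans h.symm))
      have h := hodd (σ (σ.symm i₂)) (by simpa using h₂)
      exact prod_Iio_mul_mul_prod_Ioi_eq_zero hne' h.1 h.2
    · have h := hodd (σ (σ.symm i₁)) (by simpa using h₁)
      exact prod_Iio_mul_mul_prod_Ioi_eq_zero hp h.1 h.2
  rw [monomial_apply, sum_eq_zero fun p _ => hsum p, prod_eq_zero (mem_univ i₁) (hodd i₁ h₁).1,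
    prod_eq_zero (mem_univ i₁) (hodd i₁ h₁).2]
  ext a b; fin_cases a <;> fin_cases b <;> rfl

def leftOf (σ : Equiv.Perm (Fin n)) (j : Fin n) : Finset (Fin n) :=
  univ.filter fun i => σ.symm i < σ.symm j

lemma exists_leftOf_eq {j : Fin n} {S : Finset (Fin n)} (hS : j ∉ S) :
    ∃ σ : Equiv.Perm (Fin n), leftOf σ j = S := by
  let key : Fin n → ℕ := fun i => if i ∈ S then 0 else if i = j then 1 else 2
  refine ⟨Tuple.sort key, Finset.ext fun i => ?_⟩
  simp only [leftOf, mem_filter, mem_univ, true_and]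
  constructor
  · intro hlt
    by_contra hi
    have hij : i ≠ j := by rintro rfl; exact lt_irrefl _ hlt
    exact (Tuple.sort_symm_lt_sort_symm_of_lt (f := key) (by simp [key, hi, hij, hS])).asymm hlt
  · intro hi
    exact Tuple.sort_symm_lt_sort_symm_of_lt (by simp [key, hi, hS])

/-- The common value of the monomials in which the variables of `S`, and only those, stand to the
left of the odd variable `x j`. -/
def sandwich (γ : Fin n → Bool) (j : Fin n) (S : Finset (Fin n)) :
    (∀ i : Fin n, ↥(utComp F (γ i))) → M2 F :=
  fun x => ((∏ i ∈ S, (x i : M2 F) 0 0) * (x j : M2 F) 0 1 *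
    ∏ i ∈ Sᶜ.erase j, (x i : M2 F) 1 1) • e12 F

section OneOdd

variable {γ : Fin n → Bool} {j : Fin n} (hj : γ j = true) (ho : ∀ i, i ≠ j → γ i = false)
include hj ho

lemma monomial_eq_sandwich_leftOf (σ : Equiv.Perm (Fin n)) :
    monomial (F := F) γ σ = sandwich γ j (leftOf σ j) := by
  funext x
  have hxj := mem_utComp_true_iff.1 (hj ▸ (x j).2 : (x j : M2 F) ∈ utComp F true)
  have h01 : ∀ p, σ p ≠ j → (x (σ p) : M2 F) 0 1 = 0 := fun p hp =>
    (mem_utComp_false_iff.1 (ho _ hp ▸ (x (σ p)).2)).1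
  have hsum : ∑ p, (∏ r ∈ Iio p, (x (σ r) : M2 F) 0 0) * (x (σ p) : M2 F) 0 1 *
      ∏ r ∈ Ioi p, (x (σ r) : M2 F) 1 1 =
      (∏ i ∈ leftOf σ j, (x i : M2 F) 0 0) * (x j : M2 F) 0 1 *
        ∏ i ∈ (leftOf σ j)ᶜ.erase j, (x i : M2 F) 1 1 := by
    rw [sum_eq_single (σ.symm j) (fun p _ hp => by
      rw [h01 p fun h => hp (σ.eq_symm_apply.2 h), mul_zero, zero_mul]) (by simp)]
    congr 1
    · congr 1
      · exact prod_equiv σ (by simp [leftOf]) (by simp)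
      · exact congrArg (fun i => (x i : M2 F) 0 1) (σ.apply_symm_apply j)
    · refine prod_equiv σ (fun r => ?_) (by simp)
      simp only [leftOf, mem_Ioi, mem_erase, mem_compl, mem_filter, mem_univ, true_and, not_lt,
        Equiv.symm_apply_apply, ne_eq, ← σ.eq_symm_apply]
      rw [lt_iff_le_and_ne, and_comm, ne_comm]
  rw [monomial_apply, hsum, prod_eq_zero (mem_univ j) hxj.1, prod_eq_zero (mem_univ j) hxj.2.2]
  ext a b; fin_cases a <;> fin_cases b <;> simp [sandwich, e12_eq]

variable (F) in
def testPoint (T : Finset (Fin n)) : ∀ i : Fin n, ↥(utComp F (γ i)) := fun i =>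
  ⟨if i = j then e12 F else if i ∈ T then e11 F else e22 F, by
    by_cases h : i = j
    · subst h; simp [hj, mem_utComp_true_iff, e12_eq]
    · simp only [h, ho i h, if_false, mem_utComp_false_iff]
      split_ifs <;> simp [e11_eq, e22_eq]⟩

lemma sandwich_testPoint {S T : Finset (Fin n)} (hS : j ∉ S) (hT : j ∉ T) :
    sandwich γ j S (testPoint F hj ho T) = if S = T then e12 F else 0 := by
  have h00 : ∀ i ∈ S, (testPoint F hj ho T i : M2 F) 0 0 = if i ∈ T then 1 else 0 := by
    intro i hi
    by_cases hiT : i ∈ T <;> simp [testPoint, ne_of_mem_of_not_mem hi hS, hiT, e11_eq, e22_eq]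
  have h11 : ∀ i ∈ Sᶜ.erase j,
      (testPoint F hj ho T i : M2 F) 1 1 = if i ∈ T then 0 else 1 := by
    intro i hi
    by_cases hiT : i ∈ T <;> simp [testPoint, (mem_erase.1 hi).1, hiT, e11_eq, e22_eq]
  have hj01 : (testPoint F hj ho T j : M2 F) 0 1 = 1 := by simp [testPoint, e12_eq]
  simp only [sandwich, prod_congr rfl h00, prod_congr rfl h11, hj01, mul_one]
  split_ifs with hST
  · subst hST
    rw [prod_eq_one fun i hi => if_pos hi, prod_eq_one fun i hi => if_neg ?_, one_mul, one_smul]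
    exact mem_compl.1 (mem_erase.1 hi).2
  · rw [smul_eq_zero]
    left
    obtain ⟨i, hiS, hiT⟩ | ⟨i, hiT, hiS⟩ : (∃ i ∈ S, i ∉ T) ∨ ∃ i ∈ T, i ∉ S := by
      by_contra! h
      exact hST (Finset.Subset.antisymm h.1 h.2)
    · rw [prod_eq_zero hiS (if_neg hiT), zero_mul]
    · refine mul_eq_zero_of_right _ (prod_eq_zero (mem_erase.2 ⟨?_, mem_compl.2 hiS⟩) (if_pos hiT))
      rintro rfl
      exact hT hiT

lemma linearIndependent_sandwich :
    LinearIndependent F fun S : (univ.erase j).powerset => sandwich (F := F) γ j S := by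
  have hj_notMem : ∀ S : (univ.erase j).powerset, j ∉ (S : Finset (Fin n)) := fun S hS =>
    (mem_erase.1 (mem_powerset.1 S.2 hS)).1 rfl
  rw [Fintype.linearIndependent_iff]
  intro c hc T
  have hval : ∀ S : (univ.erase j).powerset,
      sandwich γ j S (testPoint F hj ho T) = if S = T then e12 F else 0 := fun S => by
    simp only [sandwich_testPoint hj ho (hj_notMem S) (hj_notMem T), Subtype.coe_inj]
  have hT := congrFun hc (testPoint F hj ho T)
  simp only [Finset.sum_apply, Pi.smul_apply, hval, smul_ite, smul_zero, sum_ite_eq', mem_univ,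
    if_true, Pi.zero_apply] at hT
  have he12 : e12 F ≠ 0 := fun h => by simpa [e12_eq] using congrFun (congrFun h 0) 1
  exact (smul_eq_zero.1 hT).resolve_right he12

lemma range_monomial_eq_range_sandwich :
    Set.range (monomial (F := F) γ) =
      Set.range fun S : (univ.erase j).powerset => sandwich γ j S := by
  ext f
  constructor
  · rintro ⟨σ, rfl⟩
    refine ⟨⟨leftOf σ j, mem_powerset.2 fun i hi => mem_erase.2 ⟨?_, mem_univ i⟩⟩,
      (monomial_eq_sandwich_leftOf hj ho σ).symm⟩
    rintro rfl
    simp [leftOf] at hi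
  · rintro ⟨⟨S, hS⟩, rfl⟩
    obtain ⟨σ, hσ⟩ := exists_leftOf_eq fun h => (mem_erase.1 (mem_powerset.1 hS h)).1 rfl
    exact ⟨σ, by rw [monomial_eq_sandwich_leftOf hj ho σ, hσ]⟩

lemma finrank_Vspan_F1set_of_one_odd :
    Module.finrank F (Vspan F (F1set F) γ) = 2 ^ (n - 1) := by
  rw [Vspan_F1set_eq, range_monomial_eq_range_sandwich hj ho,
    finrank_span_eq_card (linearIndependent_sandwich hj ho), Fintype.card_coe, card_powerset,
    card_erase_of_mem (mem_univ j), card_univ, Fintype.card_fin]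

end OneOdd

lemma finrank_Vspan_F1set (γ : Fin n → Bool) :
    Module.finrank F (Vspan F (F1set F) γ) = (if γ = fun _ => false then 1 else 0) +
      ∑ j, if γ = (fun i => decide (i = j)) then 2 ^ (n - 1) else 0 := by
  rcases Bool.forall_false_or_exists_unique_true_or_two_true γ with
    h0 | ⟨j, hj, ho⟩ | ⟨i₁, i₂, hne, h₁, h₂⟩
  · obtain rfl : γ = fun _ => false := funext h0
    simp [finrank_Vspan_F1set_of_forall_false h0, funext_iff]
  · obtain rfl : γ = fun i => decide (i = j) := funext fun i => by
      by_cases h : i = j <;> simp [h, hj, ho]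
    simp [finrank_Vspan_F1set_of_one_odd hj ho, funext_iff]
  · rw [finrank_Vspan_F1set_of_two_odd hne h₁ h₂, if_neg (by rintro rfl; simp at h₁), zero_add,
      sum_eq_zero fun k _ => if_neg ?_]
    rintro rfl
    simp only [decide_eq_true_eq] at h₁ h₂
    exact hne (h₁.trans h₂.symm)

end UT2

theorem stmt14_general (F : Type*) [Field F] (n : ℕ) :
    (∑ γ : Fin n → Bool, Module.finrank F ↥(Vspan F (F1set F) γ))
      = n * 2 ^ (n - 1) + 1 := by
  rw [Finset.sum_congr rfl fun γ _ => UT2.finrank_Vspan_F1set γ, Finset.sum_add_distrib,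
    Finset.sum_comm]
  simp [add_comm]

/-- For every `n ≥ 1`, the `n`-th generalized graded codimension of `UT₂`
with its canonical `ℤ₂`-grading and the trivial action `B = F·1` (i.e. the ordinary
`ℤ₂`-graded codimension of `UT₂`) is `c_n^{F·1} = n·2^{n-1} + 1`. -/
theorem stmt14 (F : Type*) [Field F] [CharZero F] (n : ℕ) (hn : 1 ≤ n) :
    (∑ γ : Fin n → Bool, Module.finrank F ↥(Vspan F (F1set F) γ))
      = n * 2 ^ (n - 1) + 1 :=
  stmt14_general F n
end
end

section
/- Let F be a field of characteristic zero. For every n ≥ 1, the F-span of the set of all functions from D × (F·e₁₂) to UT₂ of the form (y, z) ↦ b₀·u₁·b₁·u₂·b₂·⋯·uₙ·bₙ, where b₀, …, bₙ range over UT₂ and exactly one of u₁, …, uₙ equals z while all the others equal y, has dimension exactly n. (This is the multiplicity of the irreducible character indexed by λ = (n−1), μ = (1) in the generalized graded cocharacter of UT₂ under the action of UT₂ itself.) -/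
/-!
Write `y = α e₁₁ + β e₂₂` and `z = γ e₁₂`. With upper triangular `bᵢ`, the word with `z` in
position `j` collapses to a multiple of `e₁₂`: the factors left of `z` only contribute their
`(0,0)` entries and those right of it their `(1,1)` entries. So each such function is a scalar
multiple of `(y, z) ↦ α^j γ β^(n-1-j) e₁₂`, the word with all `bᵢ = 1`. At `α = t`, `β = γ = 1`
these `n` functions become the powers `t^j`, which are linearly independent over an infinite field.
-/

noncomputable section

/-- `D = F e₁₁ ⊕ F e₂₂`, the even component of the canonical `ℤ₂`-grading of `UT₂`. -/
def Dsub (F : Type*) [Field F] : Submodule F (M2 F) := Submodule.span F {e11 F, e22 F}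

/-- `F e₁₂`, the odd component of the canonical `ℤ₂`-grading of `UT₂`. -/
def oddSub (F : Type*) [Field F] : Submodule F (M2 F) := Submodule.span F {e12 F}

lemma Polynomial.linearIndependent_pow_fun (F : Type*) [Field F] [Infinite F] (n : ℕ) :
    LinearIndependent F fun (j : Fin n) (t : F) => t ^ (j : ℕ) := by
  let eval : Polynomial F →ₗ[F] (F → F) := LinearMap.pi Polynomial.leval
  have heval : LinearMap.ker eval = ⊥ :=
    LinearMap.ker_eq_bot.mpr fun p q h => Polynomial.funext fun t => congrFun h t
  have hmono := ((Polynomial.basisMonomials F).linearIndependent.comp _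
    (Fin.val_injective (n := n))).map' eval heval
  have hpow : eval ∘ Polynomial.basisMonomials F ∘ Fin.val =
      fun (j : Fin n) (t : F) => t ^ (j : ℕ) := by
    ext j t
    simp [eval]
  exact hpow ▸ hmono

namespace UT2

open Finset

variable {F : Type*} [Field F]

@[simp] lemma mem_UTset {A : M2 F} : A ∈ UTset F ↔ A 1 0 = 0 := Iff.rfl

lemma mul_apply_fin_two (A B : M2 F) (i k : Fin 2) :
    (A * B) i k = A i 0 * B 0 k + A i 1 * B 1 k := by
  simp [Matrix.mul_apply, Fin.sum_univ_two]

lemma mul_mem_UTset {A B : M2 F} (hA : A ∈ UTset F) (hB : B ∈ UTset F) : A * B ∈ UTset F := by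
  rw [mem_UTset] at *
  simp [mul_apply_fin_two, hA, hB]

lemma one_mem_UTset : (1 : M2 F) ∈ UTset F := by
  simp

lemma mul_apply_one_one {A B : M2 F} (hA : A ∈ UTset F) : (A * B) 1 1 = A 1 1 * B 1 1 := by
  rw [mem_UTset] at hA
  simp [mul_apply_fin_two, hA]

lemma mul_e12 {A : M2 F} (hA : A ∈ UTset F) : A * e12 F = A 0 0 • e12 F := by
  rw [mem_UTset] at hA
  ext i k
  fin_cases i <;> fin_cases k <;> simp [e12, hA]

lemma e12_mul {A : M2 F} (hA : A ∈ UTset F) : e12 F * A = A 1 1 • e12 F := by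
  rw [mem_UTset] at hA
  ext i k
  fin_cases i <;> fin_cases k <;> simp [e12, hA]

lemma prod_ofFn_mem_UTset {m : ℕ} {g : Fin m → M2 F} (hg : ∀ i, g i ∈ UTset F) :
    (List.ofFn g).prod ∈ UTset F :=
  List.prod_induction _ (fun _ _ => mul_mem_UTset) one_mem_UTset
    (fun _ hx => by obtain ⟨i, rfl⟩ := List.mem_ofFn.mp hx; exact hg i)

lemma prod_ofFn_apply_one_one {m : ℕ} {g : Fin m → M2 F} (hg : ∀ i, g i ∈ UTset F) :
    (List.ofFn g).prod 1 1 = ∏ i, g i 1 1 := by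
  induction m with
  | zero => simp
  | succ m ih =>
    rw [List.ofFn_succ, List.prod_cons, mul_apply_one_one (hg 0), ih fun i => hg i.succ,
      Fin.prod_univ_succ]

lemma prod_ofFn_eq_smul_e12 {m : ℕ} {g : Fin m → M2 F} (hg : ∀ i, g i ∈ UTset F) {j : Fin m}
    {d : Fin m → F} (hj : g j = d j • e12 F) (hlt : ∀ i < j, g i 0 0 = d i)
    (hgt : ∀ i, j < i → g i 1 1 = d i) :
    (List.ofFn g).prod = (∏ i, d i) • e12 F := by
  induction m with
  | zero => exact j.elim0
  | succ m ih =>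
    rw [List.ofFn_succ, List.prod_cons, Fin.prod_univ_succ]
    rcases Fin.eq_zero_or_eq_succ j with rfl | ⟨j, rfl⟩
    · have htail : ∀ i : Fin m, g i.succ 1 1 = d i.succ := fun i => hgt i.succ i.succ_pos
      rw [hj, smul_mul_assoc, e12_mul (prod_ofFn_mem_UTset fun i => hg i.succ),
        prod_ofFn_apply_one_one fun i => hg i.succ, prod_congr rfl fun i _ => htail i, smul_smul]
    · rw [ih (fun i => hg i.succ) hj (fun i hi => hlt i.succ (Fin.succ_lt_succ_iff.mpr hi))
          (fun i hi => hgt i.succ (Fin.succ_lt_succ_iff.mpr hi)),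
        mul_smul_comm, mul_e12 (hg 0), smul_smul, hlt 0 j.succ_pos, mul_comm]

lemma offDiag_eq_zero_of_mem_Dsub {y : M2 F} (hy : y ∈ Dsub F) : y 1 0 = 0 ∧ y 0 1 = 0 := by
  obtain ⟨a, b, rfl⟩ := Submodule.mem_span_pair.mp hy
  simp [e11, e22]

lemma eq_smul_e12_of_mem_oddSub {z : M2 F} (hz : z ∈ oddSub F) : z = z 0 1 • e12 F := by
  obtain ⟨c, rfl⟩ := Submodule.mem_span_singleton.mp hz
  simp [e12]

variable (n : ℕ)

def word (b : Fin (n + 1) → M2 F) (j : Fin n) (p : ↥(Dsub F) × ↥(oddSub F)) : M2 F :=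
  b 0 * (List.ofFn fun i : Fin n => (if i = j then (p.2 : M2 F) else (p.1 : M2 F)) * b i.succ).prod

/-- `α^j γ β^(n-1-j) e₁₂`, written as a product over positions to match
`prod_ofFn_eq_smul_e12`. -/
def monomialFun (j : Fin n) (p : ↥(Dsub F) × ↥(oddSub F)) : M2 F :=
  (∏ i : Fin n, if i < j then p.1.1 0 0 else if i = j then p.2.1 0 1 else p.1.1 1 1) • e12 F

variable {n}

lemma word_eq_smul_monomialFun {b : Fin (n + 1) → M2 F} (hb : ∀ i, b i ∈ UTset F) (j : Fin n) :
    word n b j =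
      (b 0 0 0 * ∏ i : Fin n, if i < j then b i.succ 0 0 else b i.succ 1 1) • monomialFun n j := by
  funext ⟨⟨y, hyD⟩, ⟨z, hzO⟩⟩
  obtain ⟨hy10, hy01⟩ := offDiag_eq_zero_of_mem_Dsub hyD
  have hz := eq_smul_e12_of_mem_oddSub hzO
  have hzUT : z ∈ UTset F := by rw [hz]; simp [e12]
  have hprod := prod_ofFn_eq_smul_e12 (g := fun i => (if i = j then z else y) * b i.succ) (j := j)
    (d := fun i => (if i < j then y 0 0 else if i = j then z 0 1 else y 1 1) *
      (if i < j then b i.succ 0 0 else b i.succ 1 1))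
    (fun i => mul_mem_UTset (by split_ifs <;> simp [hy10, hzUT]) (hb _))
    (by
      simp only [lt_irrefl, ↓reduceIte]
      conv_lhs => rw [hz]
      rw [smul_mul_assoc, e12_mul (hb _), smul_smul])
    (fun i hi => by simp [hi, hi.ne, mul_apply_fin_two, hy01])
    (fun i hi => by simp [hi.ne', hi.not_gt, mul_apply_fin_two, hy10])
  rw [word, hprod, mul_smul_comm, mul_e12 (hb 0), smul_smul, Pi.smul_apply, monomialFun,
    smul_smul, prod_mul_distrib]
  congr 1
  ring

lemma word_one (j : Fin n) : word n 1 j = monomialFun (F := F) n j := by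
  rw [word_eq_smul_monomialFun (b := 1) fun _ => one_mem_UTset]
  simp

lemma linearIndependent_monomialFun [Infinite F] :
    LinearIndependent F (monomialFun (F := F) n) := by
  let pt (t : F) : ↥(Dsub F) × ↥(oddSub F) :=
    (⟨t • e11 F + e22 F, Submodule.mem_span_pair.mpr ⟨t, 1, by rw [one_smul]⟩⟩,
      ⟨e12 F, Submodule.mem_span_singleton_self _⟩)
  let ev : (↥(Dsub F) × ↥(oddSub F) → M2 F) →ₗ[F] (F → F) :=
    { toFun := fun φ t => φ (pt t) 0 1
      map_add' := fun _ _ => rfl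
      map_smul' := fun _ _ => rfl }
  have hev : ev ∘ monomialFun n = fun (j : Fin n) (t : F) => t ^ (j : ℕ) := by
    ext j t
    simp [ev, pt, monomialFun, e11, e22, e12, prod_ite, filter_gt_eq_Iio]
  exact LinearIndependent.of_comp ev (hev ▸ Polynomial.linearIndependent_pow_fun F n)

lemma span_words_eq_span_range_monomialFun :
    Submodule.span F {f | ∃ (b : Fin (n + 1) → M2 F) (j : Fin n),
      (∀ i, b i ∈ UTset F) ∧ f = word n b j} = Submodule.span F (Set.range (monomialFun n)) := by
  refine Submodule.span_eq_span ?_ ?_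
  · rintro f ⟨b, j, hb, rfl⟩
    rw [word_eq_smul_monomialFun hb]
    exact Submodule.smul_mem _ _ (Submodule.subset_span ⟨j, rfl⟩)
  · rintro f ⟨j, rfl⟩
    exact Submodule.subset_span ⟨1, j, fun _ => one_mem_UTset, (word_one j).symm⟩

end UT2

open UT2 in
theorem stmt18_general (F : Type*) [Field F] [CharZero F] (n : ℕ) :
    Module.finrank F ↥(Submodule.span F
      {f : ↥(Dsub F) × ↥(oddSub F) → M2 F |
        ∃ (b : Fin (n + 1) → M2 F) (j : Fin n),
        (∀ i, b i ∈ UTset F) ∧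
        f = fun p : ↥(Dsub F) × ↥(oddSub F) =>
          b 0 * (List.ofFn fun i : Fin n =>
            (if i = j then ((p.2 : M2 F)) else ((p.1 : M2 F))) * b i.succ).prod})
      = n := by
  change Module.finrank F (Submodule.span F {f | ∃ (b : Fin (n + 1) → M2 F) (j : Fin n),
    (∀ i, b i ∈ UTset F) ∧ f = word n b j}) = n
  rw [span_words_eq_span_range_monomialFun, finrank_span_eq_card linearIndependent_monomialFun,
    Fintype.card_fin]

/-- For every `n ≥ 1`, the `F`-span of the functions
`D × (F e₁₂) → UT₂` of the form `(y, z) ↦ b₀ u₁ b₁ u₂ b₂ ⋯ uₙ bₙ`, where `b₀, …, bₙ`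
range over `UT₂` and exactly one of `u₁, …, uₙ` equals `z` while all the others equal `y`,
has dimension exactly `n`. -/
theorem stmt18 (F : Type*) [Field F] [CharZero F] (n : ℕ) (hn : 1 ≤ n) :
    Module.finrank F ↥(Submodule.span F
      {f : ↥(Dsub F) × ↥(oddSub F) → M2 F |
        ∃ (b : Fin (n + 1) → M2 F) (j : Fin n),
        (∀ i, b i ∈ UTset F) ∧
        f = fun p : ↥(Dsub F) × ↥(oddSub F) =>
          b 0 * (List.ofFn fun i : Fin n =>
            (if i = j then ((p.2 : M2 F)) else ((p.1 : M2 F))) * b i.succ).prod})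
      = n :=
  stmt18_general F n
end
end
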